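/- Let M be an m×n matrix with entries in the three-element set {1, 0', 0*}. Suppose M avoids (as submatrices with strictly increasing row and column indices) the patterns [[0*,1],[1,0*]], [[1,0*],[0*,1]], [[1,*],[0',1]], and [[0*,*],[0',0*]], and suppose every 0* entry has a 1 strictly to its right in its row and a 1 strictly above it in its column. Then there exists a permutation of the columns of M such that in the permuted matrix, no row contains a 1 strictly to the left of a 0* (i.e., the permuted matrix avoids the 1×2 pattern (1 0*)). -/

import Mathlib

/-!
Column `c` has to be placed before column `d` whenever some row has `0*` in `c` and `1` in `d`,
so it suffices that this relation has no closed walk: then it is well founded and sorting the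
columns by rank gives the permutation. Take a shortest closed walk `c₀ → c₁ → ⋯ → c₀`, the step
`cₜ → cₜ₊₁` witnessed by row `rₜ`. For `s ∉ {t, t + 1}` the entry `(rₜ, cₛ)` is `0'`: a `1` or
a `0*` there would give a chord `cₜ → cₛ` or `cₛ → cₜ₊₁`, shortening the walk. Let `rₛ` be the topmost of these rows. If `cₛ < cₛ₊₁`, the entry
`(rₛ₊₁, cₛ)` turns rows `rₛ, rₛ₊₁` into `[[0*,1],[1,0*]]` or `[[0*,*],[0',0*]]`; if `cₛ₊₁ < cₛ`,
the entry `(rₛ₋₁, cₛ₊₁)` turns rows `rₛ, rₛ₋₁` into `[[1,0*],[0*,1]]` or `[[1,*],[0',1]]`.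
-/

/-- The three possible entries of the relabeled matrix: 1, 0' (plain zero), 0* (starred zero). -/
inductive Entry where
  | one : Entry
  | zeroP : Entry  -- 0'
  | zeroS : Entry  -- 0*
deriving DecidableEq

section ClosedWalk

variable {α : Type*} {R : α → α → Prop}

def IsClosedWalk (R : α → α → Prop) {k : ℕ} (x : ZMod (k + 1) → α) : Prop :=
  ∀ t, R (x t) (x (t + 1))

theorem isClosedWalk_of_path {g : ℕ → α} {d : ℕ} (hg : ∀ j < d, R (g j) (g (j + 1)))
    (hd : R (g d) (g 0)) : IsClosedWalk R fun u : ZMod (d + 1) => g u.val := by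
  intro u
  rcases (Nat.lt_succ_iff.mp (ZMod.val_lt u)).lt_or_eq with hlt | heq
  · have hsucc : (u + 1).val = u.val + 1 := by
      rw [← ZMod.val_cast_of_lt (n := d + 1) (by omega : u.val + 1 < d + 1)]
      push_cast [ZMod.natCast_zmod_val]
      rfl
    simpa only [hsucc] using hg _ hlt
  · have hu : u = -1 := ZMod.val_injective _ (heq.trans (ZMod.val_neg_one d).symm)
    simpa only [hu, neg_add_cancel, ZMod.val_zero, ZMod.val_neg_one] using hd

theorem exists_isClosedWalk_of_forall_rel_succ [Finite α] {f : ℕ → α}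
    (hf : ∀ j, R (f j) (f (j + 1))) : ∃ k, ∃ x : ZMod (k + 1) → α, IsClosedWalk R x := by
  obtain ⟨a, b, hab, heq⟩ := Finite.exists_ne_map_eq_of_infinite f
  wlog hlt : a < b generalizing a b
  · exact this b a hab.symm heq.symm (by omega)
  obtain ⟨d, rfl⟩ := Nat.exists_eq_add_of_lt hlt
  refine ⟨d, _, isClosedWalk_of_path (g := fun j => f (a + j)) (fun j _ => hf _) ?_⟩
  simpa only [add_zero, heq, add_assoc] using hf (a + d)

theorem exists_isClosedWalk_of_chord {k : ℕ} {x : ZMod (k + 1) → α} (hx : IsClosedWalk R x)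
    {a b : ZMod (k + 1)} (hab : R (x a) (x b)) :
    ∃ y : ZMod ((a - b).val + 1) → α, IsClosedWalk R y := by
  refine ⟨_, isClosedWalk_of_path (g := fun j => x (b + j)) (fun j _ => ?_) ?_⟩
  · simpa only [Nat.cast_succ, add_assoc] using hx (b + j)
  · simpa only [ZMod.natCast_zmod_val, add_sub_cancel, Nat.cast_zero, add_zero] using hab

theorem exists_isClosedWalk_chordless (h : ∃ k, ∃ x : ZMod (k + 1) → α, IsClosedWalk R x) :
    ∃ k, ∃ x : ZMod (k + 1) → α, IsClosedWalk R x ∧ ∀ a b, R (x a) (x b) → b = a + 1 := by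
  classical
  obtain ⟨x, hx⟩ := Nat.find_spec h
  refine ⟨_, x, hx, fun a b hab => ?_⟩
  by_contra hne
  obtain ⟨y, hy⟩ := exists_isClosedWalk_of_chord hx hab
  refine Nat.find_min h (m := (a - b).val) ?_ ⟨y, hy⟩
  refine (Nat.lt_succ_iff.mp (ZMod.val_lt (a - b))).lt_of_ne fun hval => hne ?_
  have : a - b = -1 := ZMod.val_injective _ (hval.trans (ZMod.val_neg_one _).symm)
  linear_combination -this

theorem wellFounded_flip_of_forall_not_isClosedWalk [Finite α]
    (h : ∀ k (x : ZMod (k + 1) → α), ¬ IsClosedWalk R x) : WellFounded (flip R) := by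
  refine wellFounded_iff_isEmpty_descending_chain.mpr ⟨fun ⟨f, hf⟩ => ?_⟩
  obtain ⟨k, x, hx⟩ := exists_isClosedWalk_of_forall_rel_succ hf
  exact h k x hx

theorem exists_perm_lt_of_wellFounded_flip {n : ℕ} {R : Fin n → Fin n → Prop}
    (hR : WellFounded (flip R)) : ∃ σ : Equiv.Perm (Fin n), ∀ j j', R (σ j) (σ j') → j < j' := by
  have : IsWellFounded (Fin n) (flip R) := ⟨hR⟩
  let rk : Fin n → Ordinalᵒᵈ := fun c => OrderDual.toDual (IsWellFounded.rank (flip R) c)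
  refine ⟨Tuple.sort rk, fun j j' hjj' => (Tuple.monotone_sort rk).reflect_lt ?_⟩
  exact IsWellFounded.rank_lt_of_rel (r := flip R) hjj'

end ClosedWalk

section Patterns

open Entry

def Precedes {m n : ℕ} (M : Fin m → Fin n → Entry) (c d : Fin n) : Prop :=
  ∃ i, M i c = zeroS ∧ M i d = one

theorem not_chordless_isClosedWalk_precedes {m n : ℕ} {M : Fin m → Fin n → Entry}
    (h1 : ¬ ∃ (i1 i2 : Fin m) (j1 j2 : Fin n), i1 < i2 ∧ j1 < j2 ∧
      M i1 j1 = zeroS ∧ M i1 j2 = one ∧ M i2 j1 = one ∧ M i2 j2 = zeroS)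
    (h2 : ¬ ∃ (i1 i2 : Fin m) (j1 j2 : Fin n), i1 < i2 ∧ j1 < j2 ∧
      M i1 j1 = one ∧ M i1 j2 = zeroS ∧ M i2 j1 = zeroS ∧ M i2 j2 = one)
    (h3 : ¬ ∃ (i1 i2 : Fin m) (j1 j2 : Fin n), i1 < i2 ∧ j1 < j2 ∧
      M i1 j1 = one ∧ M i2 j1 = zeroP ∧ M i2 j2 = one)
    (h4 : ¬ ∃ (i1 i2 : Fin m) (j1 j2 : Fin n), i1 < i2 ∧ j1 < j2 ∧
      M i1 j1 = zeroS ∧ M i2 j1 = zeroP ∧ M i2 j2 = zeroS)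
    {k : ℕ} {x : ZMod (k + 1) → Fin n} (hx : IsClosedWalk (Precedes M) x)
    (hchord : ∀ a b, Precedes M (x a) (x b) → b = a + 1) : False := by
  choose i hi using hx
  obtain ⟨s, hs⟩ := Finite.exists_min i
  obtain ⟨p, hps⟩ : ∃ p, p + 1 = s := ⟨s - 1, sub_add_cancel s 1⟩
  obtain ⟨hs_star, hs_one⟩ := hi s
  obtain ⟨hnext_star, -⟩ := hi (s + 1)
  obtain ⟨hp_star, hp_one⟩ := hi p
  rw [hps] at hp_one
  have hxs : x s ≠ x (s + 1) := fun h => by simp [h, hs_one] at hs_star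
  have hs_succ : s + 1 ≠ s := fun h => hxs (by rw [h])
  have row_next : i s < i (s + 1) :=
    (hs _).lt_of_ne fun h => by simp [h, hnext_star] at hs_one
  have row_prev : i s < i p :=
    (hs _).lt_of_ne fun h => by simp [h, hp_one] at hs_star
  rcases lt_trichotomy (x s) (x (s + 1)) with hlt | heq | hgt
  · cases hM : M (i (s + 1)) (x s) with
    | one => exact h1 ⟨_, _, _, _, row_next, hlt, hs_star, hs_one, hM, hnext_star⟩
    | zeroP => exact h4 ⟨_, _, _, _, row_next, hlt, hs_star, hM, hnext_star⟩
    | zeroS =>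
      exact hs_succ (add_right_cancel (hchord s (s + 1 + 1) ⟨_, hM, (hi (s + 1)).2⟩))
  · exact hxs heq
  · cases hM : M (i p) (x (s + 1)) with
    | one => exact hs_succ (by simpa only [hps] using hchord p (s + 1) ⟨_, hp_star, hM⟩)
    | zeroP => exact h3 ⟨_, _, _, _, row_prev, hgt, hs_one, hM, hp_one⟩
    | zeroS => exact h2 ⟨_, _, _, _, row_prev, hgt, hs_one, hs_star, hM, hp_one⟩

end Patterns

open Entry in
theorem stmt_11_general (m n : ℕ) (M : Fin m → Fin n → Entry)
    -- avoids [[0*,1],[1,0*]]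
    (h1 : ¬ ∃ (i1 i2 : Fin m) (j1 j2 : Fin n), i1 < i2 ∧ j1 < j2 ∧
      M i1 j1 = zeroS ∧ M i1 j2 = one ∧ M i2 j1 = one ∧ M i2 j2 = zeroS)
    -- avoids [[1,0*],[0*,1]]
    (h2 : ¬ ∃ (i1 i2 : Fin m) (j1 j2 : Fin n), i1 < i2 ∧ j1 < j2 ∧
      M i1 j1 = one ∧ M i1 j2 = zeroS ∧ M i2 j1 = zeroS ∧ M i2 j2 = one)
    -- avoids [[1,*],[0',1]]
    (h3 : ¬ ∃ (i1 i2 : Fin m) (j1 j2 : Fin n), i1 < i2 ∧ j1 < j2 ∧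
      M i1 j1 = one ∧ M i2 j1 = zeroP ∧ M i2 j2 = one)
    -- avoids [[0*,*],[0',0*]]
    (h4 : ¬ ∃ (i1 i2 : Fin m) (j1 j2 : Fin n), i1 < i2 ∧ j1 < j2 ∧
      M i1 j1 = zeroS ∧ M i2 j1 = zeroP ∧ M i2 j2 = zeroS) :
    ∃ σ : Equiv.Perm (Fin n),
      ¬ ∃ (i : Fin m) (j j' : Fin n), j < j' ∧ M i (σ j) = one ∧ M i (σ j') = zeroS := by
  have hwf : WellFounded (flip (Precedes M)) :=
    wellFounded_flip_of_forall_not_isClosedWalk fun k x hx => by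
      obtain ⟨_, y, hy, hchord⟩ := exists_isClosedWalk_chordless ⟨k, x, hx⟩
      exact not_chordless_isClosedWalk_precedes h1 h2 h3 h4 hy hchord
  obtain ⟨σ, hσ⟩ := exists_perm_lt_of_wellFounded_flip hwf
  exact ⟨σ, fun ⟨i, j, j', hjj', hone, hzero⟩ => (hσ j' j ⟨i, hzero, hone⟩).not_gt hjj'⟩

open Entry in
theorem stmt_11 (m n : ℕ) (M : Fin m → Fin n → Entry)
    -- avoids [[0*,1],[1,0*]]
    (h1 : ¬ ∃ (i1 i2 : Fin m) (j1 j2 : Fin n), i1 < i2 ∧ j1 < j2 ∧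
      M i1 j1 = zeroS ∧ M i1 j2 = one ∧ M i2 j1 = one ∧ M i2 j2 = zeroS)
    -- avoids [[1,0*],[0*,1]]
    (h2 : ¬ ∃ (i1 i2 : Fin m) (j1 j2 : Fin n), i1 < i2 ∧ j1 < j2 ∧
      M i1 j1 = one ∧ M i1 j2 = zeroS ∧ M i2 j1 = zeroS ∧ M i2 j2 = one)
    -- avoids [[1,*],[0',1]]
    (h3 : ¬ ∃ (i1 i2 : Fin m) (j1 j2 : Fin n), i1 < i2 ∧ j1 < j2 ∧
      M i1 j1 = one ∧ M i2 j1 = zeroP ∧ M i2 j2 = one)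
    -- avoids [[0*,*],[0',0*]]
    (h4 : ¬ ∃ (i1 i2 : Fin m) (j1 j2 : Fin n), i1 < i2 ∧ j1 < j2 ∧
      M i1 j1 = zeroS ∧ M i2 j1 = zeroP ∧ M i2 j2 = zeroS)
    -- every 0* has a 1 to its right and a 1 above it
    (hwit : ∀ i j, M i j = zeroS →
      (∃ j' : Fin n, j < j' ∧ M i j' = one) ∧ (∃ i' : Fin m, i' < i ∧ M i' j = one)) :
    ∃ σ : Equiv.Perm (Fin n),
      ¬ ∃ (i : Fin m) (j j' : Fin n), j < j' ∧ M i (σ j) = one ∧ M i (σ j') = zeroS :=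
  stmt_11_general m n M h1 h2 h3 h4
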